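/- Let ℓ > 0, a > 0 with a < ℓ, and let f : [0, ℓ) → ℝ be differentiable with f′(t) ≥ f(t)² − 1 for all t ∈ [0, ℓ) and f(0) ≥ coth a. Then f is unbounded above on [0, a); in particular no such f can be continuous on all of [0, ℓ) with ℓ > a, so any differentiable f with f′ ≥ f² − 1 and f(0) ≥ coth a is defined only on an interval of length at most a. -/

import Mathlib

/-- The real hyperbolic cotangent, `coth x = cosh x / sinh x`. -/
noncomputable def Real.coth (x : ℝ) : ℝ := Real.cosh x / Real.sinh x

/-!
`coth (a - t)` solves `y' = y² - 1` and blows up as `t → a⁻`. A function with `f' ≥ f² - 1`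
starting above it stays above it: perturbing the solution to `coth (a - t) - ε e^{λ (t - t₀)}`,
with `λ` larger than twice its maximum, makes the derivative inequality strict wherever the two
functions touch, so the perturbed solution can never overtake `f`; then `ε → 0`.
-/

open Set Filter Topology

namespace Real

theorem hasDerivAt_coth {x : ℝ} (hx : x ≠ 0) : HasDerivAt coth (1 - coth x ^ 2) x := by
  have hsinh : sinh x ≠ 0 := sinh_ne_zero.2 hx
  refine ((hasDerivAt_cosh x).div (hasDerivAt_sinh x) hsinh).congr_deriv ?_
  rw [coth]
  field_simp

theorem hasDerivAt_coth_const_sub {a x : ℝ} (hx : x ≠ a) :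
    HasDerivAt (fun t => coth (a - t)) (coth (a - x) ^ 2 - 1) x :=
  ((hasDerivAt_coth (sub_ne_zero.2 hx.symm)).comp x ((hasDerivAt_id x).const_sub a)).congr_deriv
    (by ring)

theorem tendsto_coth_nhdsGT_zero : Tendsto coth (𝓝[>] 0) atTop := by
  have hcosh : Tendsto cosh (𝓝[>] 0) (𝓝 1) := by
    simpa using (continuous_cosh.tendsto 0).mono_left nhdsWithin_le_nhds
  have hsinh : Tendsto sinh (𝓝[>] 0) (𝓝[>] 0) := by
    refine tendsto_nhdsWithin_iff.2 ⟨?_, ?_⟩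
    · simpa using (continuous_sinh.tendsto 0).mono_left nhdsWithin_le_nhds
    · filter_upwards [self_mem_nhdsWithin] with x hx using sinh_pos_iff.2 hx
  exact hcosh.pos_mul_atTop one_pos (tendsto_inv_nhdsGT_zero.comp hsinh)

theorem tendsto_coth_const_sub_nhdsLT (a : ℝ) :
    Tendsto (fun t => coth (a - t)) (𝓝[<] a) atTop := by
  refine tendsto_coth_nhdsGT_zero.comp (tendsto_nhdsWithin_iff.2 ⟨?_, ?_⟩)
  · simpa using ((continuous_sub_left a).tendsto a).mono_left nhdsWithin_le_nhds
  · filter_upwards [self_mem_nhdsWithin] with t (ht : t < a) using sub_pos.2 ht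

end Real

section RiccatiComparison

variable {f f' g : ℝ → ℝ} {c a b : ℝ}

theorem riccati_solution_le_of_supersolution_Icc (hab : a ≤ b) (hf : ContinuousOn f (Icc a b))
    (hf' : ∀ x ∈ Ico a b, HasDerivWithinAt f (f' x) (Ici x) x)
    (hf'_ge : ∀ x ∈ Ico a b, f x ^ 2 - c ≤ f' x)
    (hg : ∀ x ∈ Icc a b, HasDerivAt g (g x ^ 2 - c) x) (hga : g a ≤ f a) : g b ≤ f b := by
  obtain ⟨C, hC⟩ : BddAbove (g '' Icc a b) :=
    isCompact_Icc.bddAbove_image fun x hx => (hg x hx).continuousAt.continuousWithinAt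
  set l := 2 * C + 1
  refine le_of_forall_sub_le fun ε hε => ?_
  set gε : ℝ → ℝ := fun x => g x - ε * Real.exp (l * (x - b))
  set gε' : ℝ → ℝ := fun x => g x ^ 2 - c - ε * l * Real.exp (l * (x - b))
  have hgε : ∀ x ∈ Icc a b, HasDerivAt gε (gε' x) x := fun x hx =>
    ((hg x hx).sub ((((hasDerivAt_id x).sub_const b).const_mul l).exp.const_mul ε)).congr_deriv
      (by simp only [gε', id]; ring_nf)
  -- where `gε = f`, writing `e = ε exp (l (x - b))`: `f' - gε' ≥ e (l - 2 g) + e² > 0` as `g ≤ C`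
  have hcontact : ∀ x ∈ Ico a b, gε x = f x → gε' x < f' x := by
    intro x hx hfx
    have hgC : g x ≤ C := hC (mem_image_of_mem g (Ico_subset_Icc_self hx))
    have he : 0 < ε * Real.exp (l * (x - b)) := mul_pos hε (Real.exp_pos _)
    have hf'x := hf'_ge x hx
    rw [← hfx] at hf'x
    simp only [gε, gε'] at hf'x ⊢
    nlinarith [sq_nonneg (ε * Real.exp (l * (x - b)))]
  have hgεa : gε a ≤ f a := by
    have := mul_pos hε (Real.exp_pos (l * (a - b)))
    simp only [gε]
    linarith
  simpa [gε] using image_le_of_deriv_right_lt_deriv_boundary'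
    (fun x hx => (hgε x hx).continuousAt.continuousWithinAt)
    (fun x hx => (hgε x (Ico_subset_Icc_self hx)).hasDerivWithinAt) hgεa hf hf' hcontact
    (right_mem_Icc.2 hab)

theorem riccati_solution_le_of_supersolution
    (hf : ∀ x ∈ Ico a b, HasDerivWithinAt f (f' x) (Ico a b) x)
    (hf'_ge : ∀ x ∈ Ico a b, f x ^ 2 - c ≤ f' x)
    (hg : ∀ x ∈ Ico a b, HasDerivAt g (g x ^ 2 - c) x) (hga : g a ≤ f a) :
    ∀ x ∈ Ico a b, g x ≤ f x := by
  intro x hx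
  have hsub : Icc a x ⊆ Ico a b := Icc_subset_Ico_right hx.2
  refine riccati_solution_le_of_supersolution_Icc hx.1
    (fun y hy => ((hf y (hsub hy)).continuousWithinAt).mono hsub) (fun y hy => ?_)
    (fun y hy => hf'_ge y (hsub (Ico_subset_Icc_self hy)))
    (fun y hy => hg y (hsub hy)) hga
  have hyb : y < b := hy.2.trans hx.2
  exact (hf y ⟨hy.1, hyb⟩).mono_of_mem_nhdsWithin
    (mem_of_superset (Ico_mem_nhdsGE hyb) (Ico_subset_Ico_left hy.1))

end RiccatiComparison

theorem riccati_unbounded_general (ℓ a : ℝ) (ha : 0 < a) (haℓ : a < ℓ)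
    (f f' : ℝ → ℝ)
    (hdiff : ∀ t ∈ Set.Ico (0:ℝ) ℓ, HasDerivWithinAt f (f' t) (Set.Ico (0:ℝ) ℓ) t)
    (hineq : ∀ t ∈ Set.Ico (0:ℝ) ℓ, f' t ≥ (f t) ^ 2 - 1)
    (h0 : f 0 ≥ Real.coth a) :
    ¬ BddAbove (f '' Set.Ico (0:ℝ) a) := by
  have hsub : Ico 0 a ⊆ Ico 0 ℓ := Ico_subset_Ico_right haℓ.le
  have hcoth_le : ∀ t ∈ Ico 0 a, Real.coth (a - t) ≤ f t :=
    riccati_solution_le_of_supersolution (fun t ht => (hdiff t (hsub ht)).mono hsub)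
      (fun t ht => hineq t (hsub ht))
      (fun t ht => Real.hasDerivAt_coth_const_sub ht.2.ne) (by simpa using h0)
  have hf_top : Tendsto f (𝓝[<] a) atTop :=
    tendsto_atTop_mono' _ (eventually_of_mem (Ico_mem_nhdsLT ha) hcoth_le)
      (Real.tendsto_coth_const_sub_nhdsLT a)
  rintro ⟨M, hM⟩
  obtain ⟨t, hMt, ht⟩ := ((hf_top.eventually_gt_atTop M).and (Ico_mem_nhdsLT ha)).exists
  exact (hM (mem_image_of_mem f ht)).not_gt hMt

/-- **Unboundedness / blow-up.**  If `0 < a < ℓ` and `f` is differentiable on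
`[0, ℓ)` with `f′ t ≥ (f t)² − 1` there and `f 0 ≥ coth a`, then `f` is
unbounded above on `[0, a)`; in particular no such `f` exists on an interval
of length greater than `a`. -/
theorem riccati_unbounded (ℓ a : ℝ) (hℓ : 0 < ℓ) (ha : 0 < a) (haℓ : a < ℓ)
    (f f' : ℝ → ℝ)
    (hdiff : ∀ t ∈ Set.Ico (0:ℝ) ℓ, HasDerivWithinAt f (f' t) (Set.Ico (0:ℝ) ℓ) t)
    (hineq : ∀ t ∈ Set.Ico (0:ℝ) ℓ, f' t ≥ (f t) ^ 2 - 1)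
    (h0 : f 0 ≥ Real.coth a) :
    ¬ BddAbove (f '' Set.Ico (0:ℝ) a) :=
  riccati_unbounded_general ℓ a ha haℓ f f' hdiff hineq h0
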